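/- For all integers m ≥ 3 and 0 ≤ a ≤ 2m, the code VT_a(m) corrects all error patterns in E_m(1); that is, for any x₁ ≠ x₂ ∈ VT_a(m) and any deletable error patterns g₁, g₂ of length m each containing at most one error, F_{g₁}(x₁) ≠ F_{g₂}(x₂). -/

import Mathlib

/-- The three kinds of deletable errors: deletion, erasure, substitution (flip). -/
inductive ErrKind : Type
  | D
  | E
  | F
  deriving DecidableEq

instance : Fintype ErrKind where
  elems := {ErrKind.D, ErrKind.E, ErrKind.F}
  complete := by intro x; cases x <;> simp

/-- A binary word of length `n`. -/
abbrev Word (n : ℕ) := Fin n → Bool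

/-- A deletable error pattern of length `n`: a pair `(e, v)`. -/
abbrev Pattern (n : ℕ) := (Fin n → Bool) × (Fin n → ErrKind)

/-- Process a list of (bit, error indicator, error kind) triples in order,
producing the corrupted string over `{0, 1, ε}` (`none` is the erasure symbol). -/
def corruptAux : List (Bool × Bool × ErrKind) → List (Option Bool)
  | [] => []
  | (xi, false, _) :: rest => some xi :: corruptAux rest
  | (_, true, ErrKind.D) :: rest => corruptAux rest
  | (_, true, ErrKind.E) :: rest => none :: corruptAux rest
  | (xi, true, ErrKind.F) :: rest => some (!xi) :: corruptAux rest

/-- The corruption `F_g(x)` of the word `x` by the pattern `g`. -/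
def corrupt {n : ℕ} (g : Pattern n) (x : Word n) : List (Option Bool) :=
  corruptAux (List.ofFn fun i => (x i, g.1 i, g.2 i))

/-- The corruption `F_g(x, t)` of the first `t` bits of `x` by the first `t` entries of `g`. -/
def corruptPrefix {n : ℕ} (g : Pattern n) (x : Word n) (t : ℕ) : List (Option Bool) :=
  corruptAux ((List.ofFn fun i => (x i, g.1 i, g.2 i)).take t)

/-- The number of errors `Σ_i e_i` of a pattern. -/
def errCount {n : ℕ} (g : Pattern n) : ℕ :=
  (Finset.univ.filter fun i => g.1 i = true).card

/-- `E_n(r)`: the set of `n`-length deletable error patterns with at most `r` errors. -/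
def Epat (n r : ℕ) : Finset (Pattern n) :=
  Finset.univ.filter fun g => errCount g ≤ r

/-- A pattern is `P`-far if any two distinct error positions are at distance at least `P`. -/
def IsPFar {n : ℕ} (P : ℕ) (g : Pattern n) : Prop :=
  ∀ i j : Fin n, i ≠ j → g.1 i = true → g.1 j = true →
    (P : ℤ) ≤ |((i : ℕ) : ℤ) - ((j : ℕ) : ℤ)|

/-- The code `C` corrects all error patterns in `F`. -/
def CorrectsIn {n : ℕ} (C : Finset (Word n)) (F : Set (Pattern n)) : Prop :=
  ∀ x₁ ∈ C, ∀ x₂ ∈ C, x₁ ≠ x₂ → ∀ g₁ ∈ F, ∀ g₂ ∈ F, corrupt g₁ x₁ ≠ corrupt g₂ x₂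

/-- The code `C` corrects all error patterns in `F` in real-time with delay at most `d`. -/
def CorrectsRealTime {n : ℕ} (C : Finset (Word n)) (F : Set (Pattern n)) (d : ℕ) : Prop :=
  ∀ z : ℕ, 1 ≤ z → z ≤ n - d → ∀ x₁ ∈ C, ∀ x₂ ∈ C, x₁ ≠ x₂ →
    ∀ g₁ ∈ F, ∀ g₂ ∈ F, corruptPrefix g₁ x₁ (z + d) ≠ corruptPrefix g₂ x₂ (z + d)

/-- The redundancy `R(C) = n - log₂ #C` of an `n`-length code `C`. -/
noncomputable def redundancy {n : ℕ} (C : Finset (Word n)) : ℝ :=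
  (n : ℝ) - Real.logb 2 (C.card)

/-- The modified Varshamov–Tenengolts code
`VT_a(m) = {x ∈ {0,1}^m : Σ_{i=1}^m i·x_i ≡ a (mod 2m+1)}`. -/
def VTcode (a m : ℕ) : Finset (Fin m → Bool) :=
  Finset.univ.filter fun x =>
    (∑ i : Fin m, ((i : ℕ) + 1) * (if x i then 1 else 0)) % (2 * m + 1) = a % (2 * m + 1)

/-!
A pattern of `E_m(1)` either deletes one bit or keeps the length and alters at most one
position. Equal corruptions of the same length thus come either from two words that agree
outside two positions, whose VT weights `∑ (i + 1) x_i` then differ by a nonzero amount of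
absolute value below `2m + 1`, or from one word `y` with a bit `b` inserted at `p₁` and a bit
`c` inserted at `p₂ ≥ p₁`. In the second case the weights differ by
`(p₁ + 1) b - (p₂ + 1) c + #{ones of y in [p₁, p₂)}`, of absolute value at most `m`; so the
difference vanishes, which forces `b = c` and `y = c` on `[p₁, p₂)`, and both insertions
give the same word.
-/

/-- On a deleted bit the value `some !b` is junk. -/
def keptSymbol : Bool × Bool × ErrKind → Option Bool
  | (b, false, _) => some b
  | (_, true, .E) => none
  | (b, true, _) => some !b

lemma corruptAux_eq_map_keptSymbol {l : List (Bool × Bool × ErrKind)}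
    (h : ∀ t ∈ l, t.2 ≠ (true, .D)) : corruptAux l = l.map keptSymbol := by
  induction l with
  | nil => rfl
  | cons t l ih =>
    have ih := ih fun s hs => h s (List.mem_cons_of_mem _ hs)
    obtain ⟨b, _ | _, _ | _ | _⟩ := t <;> simp_all [corruptAux, keptSymbol]

lemma corruptAux_eraseIdx {l : List (Bool × Bool × ErrKind)} {p : ℕ} (hp : p < l.length)
    (hdel : l[p].2 = (true, .D)) : corruptAux (l.eraseIdx p) = corruptAux l := by
  induction l generalizing p with
  | nil => simp at hp
  | cons t l ih =>
    cases p with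
    | zero => obtain ⟨b, e, k⟩ := t; simp_all [corruptAux]
    | succ p =>
      have ih := ih (Nat.lt_of_succ_lt_succ hp) hdel
      obtain ⟨b, _ | _, _ | _ | _⟩ := t <;> simp [corruptAux, ih]

section

variable {m : ℕ}

lemma corrupt_eq_ofFn_keptSymbol {g : Pattern m} (x : Word m)
    (h : ∀ i, (g.1 i, g.2 i) ≠ (true, .D)) :
    corrupt g x = List.ofFn fun i => keptSymbol (x i, g.1 i, g.2 i) := by
  rw [corrupt, corruptAux_eq_map_keptSymbol, List.map_ofFn]
  · rfl
  · simpa [List.mem_ofFn] using h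

lemma corrupt_eq_map_eraseIdx {g : Pattern m} (x : Word m) {p : Fin m}
    (hp : ∀ i, g.1 i = true → i = p) (hdel : (g.1 p, g.2 p) = (true, .D)) :
    corrupt g x = ((List.ofFn x).eraseIdx p).map some := by
  set T := List.ofFn fun i => (x i, g.1 i, g.2 i)
  have hfree : ∀ t ∈ T.eraseIdx p, t.2.1 = false := by
    intro t ht
    obtain ⟨i, hi, hip, rfl⟩ := List.mem_eraseIdx_iff_getElem.mp ht
    simp only [T, List.getElem_ofFn]
    by_contra he
    exact hip (congrArg Fin.val (hp _ (by simpa using he)))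
  calc corrupt g x = corruptAux (T.eraseIdx p) :=
        (corruptAux_eraseIdx (by simp) (by simpa [T] using hdel)).symm
    _ = (T.eraseIdx p).map (some ∘ Prod.fst) := by
        rw [corruptAux_eq_map_keptSymbol fun t ht h => by simpa [h] using hfree t ht]
        refine List.map_congr_left fun t ht => ?_
        obtain ⟨b, e, k⟩ := t
        cases hfree _ ht
        rfl
    _ = ((List.ofFn x).eraseIdx p).map some := by
        rw [← List.map_map, ← List.eraseIdx_map, List.map_ofFn]
        rfl

lemma corrupt_eq_map_eraseIdx_or_eq_ofFn {g : Pattern m} (x : Word m) {p : Fin m}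
    (hp : ∀ i, g.1 i = true → i = p) :
    corrupt g x = ((List.ofFn x).eraseIdx p).map some ∨
      corrupt g x = List.ofFn fun i => keptSymbol (x i, g.1 i, g.2 i) := by
  by_cases hdel : (g.1 p, g.2 p) = (true, .D)
  · exact .inl (corrupt_eq_map_eraseIdx x hp hdel)
  · refine .inr (corrupt_eq_ofFn_keptSymbol x fun i hi => ?_)
    obtain rfl := hp i (Prod.ext_iff.mp hi).1
    exact hdel hi

lemma exists_error_pos_of_mem_Epat_one [NeZero m] {g : Pattern m} (hg : g ∈ Epat m 1) :
    ∃ p, ∀ i, g.1 i = true → i = p := by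
  obtain ⟨p, hp⟩ := Finset.card_le_one_iff_subset_singleton.mp (Finset.mem_filter.mp hg).2
  exact ⟨p, fun i hi => Finset.mem_singleton.mp (hp (by simp [hi]))⟩

end

-- `listWeight l = ∑ i, (i + 1) * l[i]`: prepending a bit shifts every later position by one.
def listWeight : List Bool → ℕ
  | [] => 0
  | b :: l => b.toNat + listWeight l + l.count true

lemma count_true_cons (b : Bool) (l : List Bool) :
    (b :: l).count true = l.count true + b.toNat := by
  cases b <;> simp

lemma listWeight_append (l₁ l₂ : List Bool) :
    listWeight (l₁ ++ l₂) = listWeight l₁ + listWeight l₂ + l₁.length * l₂.count true := by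
  induction l₁ with
  | nil => simp [listWeight]
  | cons b l ih =>
    simp only [List.cons_append, listWeight, ih, List.count_append, List.length_cons]
    ring

lemma cons_eq_append_singleton_of_weight_eq {a : ℕ} {b c : Bool} {S : List Bool}
    (h : (a + 1) * b.toNat + S.count true = (a + S.length + 1) * c.toNat) :
    b :: S = S ++ [c] := by
  have hS := S.count_le_length (a := true)
  obtain ⟨rfl, hrun⟩ : b = c ∧ ∀ s ∈ S, s = b := by
    cases b <;> cases c <;> simp at h
    · exact ⟨rfl, fun s hs => by simpa using ne_of_mem_of_not_mem hs (List.count_eq_zero.mp h)⟩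
    · omega
    · exact ⟨rfl, fun s hs => (List.count_eq_length.mp (by omega) s hs).symm⟩
  rw [List.eq_replicate_iff.mpr ⟨rfl, hrun⟩, ← List.replicate_succ, List.replicate_succ']

theorem append_cons_eq_of_listWeight_modEq {A S B : List Bool} {b c : Bool} {M : ℕ}
    (hM : A.length + S.length + 1 < M)
    (hw : listWeight (A ++ b :: (S ++ B)) ≡ listWeight (A ++ S ++ c :: B) [MOD M]) :
    A ++ b :: (S ++ B) = A ++ S ++ c :: B := by
  set K := listWeight (A ++ S ++ B) + B.count true
  have h₁ : listWeight (A ++ b :: (S ++ B)) = K + ((A.length + 1) * b.toNat + S.count true) := by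
    simp only [K, listWeight_append, listWeight, List.count_append, count_true_cons,
      List.length_append]
    ring
  have h₂ : listWeight (A ++ S ++ c :: B) = K + (A.length + S.length + 1) * c.toNat := by
    simp only [K, listWeight_append, listWeight, count_true_cons, List.length_append]
    ring
  rw [h₁, h₂] at hw
  have hS := S.count_le_length (a := true)
  have hb := b.toNat_le
  have hc := c.toNat_le
  have heq := (Nat.ModEq.add_left_cancel' K hw).eq_of_lt_of_lt (by nlinarith) (by nlinarith)
  rw [← List.cons_append, cons_eq_append_singleton_of_weight_eq heq]
  simp

theorem eq_of_eraseIdx_eq_of_listWeight_modEq {l₁ l₂ : List Bool} {p₁ p₂ M : ℕ}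
    (hp₁ : p₁ < l₁.length) (hp₂ : p₂ < l₂.length) (hM : l₁.length < M)
    (h : l₁.eraseIdx p₁ = l₂.eraseIdx p₂) (hw : listWeight l₁ ≡ listWeight l₂ [MOD M]) :
    l₁ = l₂ := by
  have hl₁ : l₁ = l₁.take p₁ ++ l₁[p₁] :: l₁.drop (p₁ + 1) := by simp
  have hl₂ : l₂ = l₂.take p₂ ++ l₂[p₂] :: l₂.drop (p₂ + 1) := by simp
  rw [List.eraseIdx_eq_take_drop_succ, List.eraseIdx_eq_take_drop_succ] at h
  rcases List.append_eq_append_iff.mp h with ⟨S, hA, hB⟩ | ⟨S, hA, hB⟩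
  · rw [hl₁, hl₂, hA, hB] at hw ⊢
    refine append_cons_eq_of_listWeight_modEq ?_ hw
    have := congrArg List.length hB
    simp at this ⊢
    omega
  · rw [hl₁, hl₂, hA, hB] at hw ⊢
    refine (append_cons_eq_of_listWeight_modEq ?_ hw.symm).symm
    have := congrArg List.length hA
    simp at this ⊢
    omega

def vtWeight {m : ℕ} (x : Fin m → Bool) : ℕ :=
  ∑ i : Fin m, ((i : ℕ) + 1) * (if x i then 1 else 0)

lemma vtWeight_modEq_of_mem_VTcode {a m : ℕ} {x₁ x₂ : Fin m → Bool} (h₁ : x₁ ∈ VTcode a m)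
    (h₂ : x₂ ∈ VTcode a m) : vtWeight x₁ ≡ vtWeight x₂ [MOD 2 * m + 1] :=
  (Finset.mem_filter.mp h₁).2.trans (Finset.mem_filter.mp h₂).2.symm

lemma count_true_ofFn {m : ℕ} (x : Fin m → Bool) :
    (List.ofFn x).count true = ∑ i, if x i then 1 else 0 := by
  induction m with
  | zero => simp
  | succ m ih =>
    rw [List.ofFn_succ, count_true_cons, ih, Fin.sum_univ_succ, add_comm]
    cases x 0 <;> rfl

lemma vtWeight_eq_listWeight_ofFn {m : ℕ} (x : Fin m → Bool) :
    vtWeight x = listWeight (List.ofFn x) := by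
  induction m with
  | zero => rfl
  | succ m ih =>
    rw [List.ofFn_succ, listWeight, ← ih, count_true_ofFn, vtWeight, vtWeight, Fin.sum_univ_succ]
    simp only [Fin.val_zero, Fin.val_succ, add_mul, one_mul, zero_add, Finset.sum_add_distrib]
    rw [show (if x 0 then 1 else 0) = (x 0).toNat by cases x 0 <;> rfl]
    ring

theorem eq_of_vtWeight_modEq_of_eq_off_pair {m M : ℕ} (hM : 2 * m ≤ M) {x₁ x₂ : Fin m → Bool}
    (hw : vtWeight x₁ ≡ vtWeight x₂ [MOD M]) {p₁ p₂ : Fin m}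
    (h : ∀ i, i ≠ p₁ → i ≠ p₂ → x₁ i = x₂ i) : x₁ = x₂ := by
  set δ : Fin m → ℤ := fun i => (if x₂ i then 1 else 0) - (if x₁ i then 1 else 0)
  have hδ : ∀ i, δ i = -1 ∨ δ i = 0 ∨ δ i = 1 := fun i => by simp only [δ]; split_ifs <;> simp
  have hdvd : (M : ℤ) ∣ ∑ i ∈ {p₁, p₂}, ((i : ℤ) + 1) * δ i := by
    rw [Finset.sum_subset (Finset.subset_univ _) fun i _ hi => ?_]
    · convert (Int.natCast_modEq_iff.mpr hw).dvd using 1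
      simp only [vtWeight, δ, Nat.cast_sum, Nat.cast_mul, ← Finset.sum_sub_distrib, mul_sub]
      push_cast
      rfl
    · simp only [Finset.mem_insert, Finset.mem_singleton, not_or] at hi
      simp [δ, h i hi.1 hi.2]
  have hsmall : ∀ z : ℤ, (M : ℤ) ∣ z → -M < z → z < M → z = 0 :=
    fun z hz h₁ h₂ => Int.eq_zero_of_abs_lt_dvd hz (abs_lt.mpr ⟨h₁, h₂⟩)
  -- Signed sums of at most two distinct weights `i + 1 ≤ m` are below `M` in absolute value and
  -- cancel only when all signs vanish.
  have hzero : δ p₁ = 0 ∧ δ p₂ = 0 := by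
    have := p₁.isLt
    have := p₂.isLt
    rcases eq_or_ne p₁ p₂ with rfl | hne
    · rw [Finset.insert_eq_of_mem (Finset.mem_singleton_self _), Finset.sum_singleton] at hdvd
      rcases hδ p₁ with h₁ | h₁ | h₁ <;> rw [h₁] at hdvd ⊢ <;> simp <;>
        have := hsmall _ hdvd (by omega) (by omega) <;> omega
    · have hne' : (p₁ : ℕ) ≠ p₂ := Fin.val_ne_of_ne hne
      rw [Finset.sum_pair hne] at hdvd
      rcases hδ p₁ with h₁ | h₁ | h₁ <;> rcases hδ p₂ with h₂ | h₂ | h₂ <;>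
        rw [h₁, h₂] at hdvd ⊢ <;> simp <;> have := hsmall _ hdvd (by omega) (by omega) <;> omega
  have hδ₀ : ∀ i, δ i = 0 → x₁ i = x₂ i := fun i => by
    simp only [δ]; cases x₁ i <;> cases x₂ i <;> simp
  funext i
  by_cases hi₁ : i = p₁
  · exact hi₁ ▸ hδ₀ _ hzero.1
  by_cases hi₂ : i = p₂
  · exact hi₂ ▸ hδ₀ _ hzero.2
  exact h i hi₁ hi₂

theorem stmt4_general (m a : ℕ)
    (x₁ x₂ : Fin m → Bool) (hx₁ : x₁ ∈ VTcode a m) (hx₂ : x₂ ∈ VTcode a m) (hne : x₁ ≠ x₂)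
    (g₁ g₂ : Pattern m) (hg₁ : g₁ ∈ Epat m 1) (hg₂ : g₂ ∈ Epat m 1) :
    corrupt g₁ x₁ ≠ corrupt g₂ x₂ := by
  rcases m with _ | n
  · exact absurd (Subsingleton.elim x₁ x₂) hne
  have hw := vtWeight_modEq_of_mem_VTcode hx₁ hx₂
  obtain ⟨p₁, hp₁⟩ := exists_error_pos_of_mem_Epat_one hg₁
  obtain ⟨p₂, hp₂⟩ := exists_error_pos_of_mem_Epat_one hg₂
  intro h
  rcases corrupt_eq_map_eraseIdx_or_eq_ofFn x₁ hp₁ with h₁ | h₁ <;>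
    rcases corrupt_eq_map_eraseIdx_or_eq_ofFn x₂ hp₂ with h₂ | h₂ <;>
    rw [h₁, h₂] at h
  · rw [vtWeight_eq_listWeight_ofFn, vtWeight_eq_listWeight_ofFn] at hw
    have hy := List.map_injective_iff.mpr (Option.some_injective _) h
    exact hne (List.ofFn_injective (eq_of_eraseIdx_eq_of_listWeight_modEq
      (by simp [Fin.is_le]) (by simp [Fin.is_le]) (by simp) hy hw))
  · simpa [-List.ofFn_succ, List.length_eraseIdx, Fin.is_le] using congrArg List.length h
  · simpa [-List.ofFn_succ, List.length_eraseIdx, Fin.is_le] using congrArg List.length h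
  · refine hne (eq_of_vtWeight_modEq_of_eq_off_pair (p₁ := p₁) (p₂ := p₂) (by omega) hw
      fun i hi₁ hi₂ => ?_)
    have hi := congrFun (List.ofFn_injective h) i
    rwa [(Bool.not_eq_true _).mp (mt (hp₁ i) hi₁), (Bool.not_eq_true _).mp (mt (hp₂ i) hi₂),
      keptSymbol, keptSymbol, Option.some_inj] at hi

/-- The modified VT code `VT_a(m)` corrects a single deletable error. -/
theorem stmt4 (m a : ℕ) (hm : 3 ≤ m) (ha : a ≤ 2 * m)
    (x₁ x₂ : Fin m → Bool) (hx₁ : x₁ ∈ VTcode a m) (hx₂ : x₂ ∈ VTcode a m) (hne : x₁ ≠ x₂)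
    (g₁ g₂ : Pattern m) (hg₁ : g₁ ∈ Epat m 1) (hg₂ : g₂ ∈ Epat m 1) :
    corrupt g₁ x₁ ≠ corrupt g₂ x₂ :=
  stmt4_general m a x₁ x₂ hx₁ hx₂ hne g₁ g₂ hg₁ hg₂
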